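/- Let p(·) ∈ P(ℝ^n) be an exponent function and W: ℝ^n → S_d a matrix weight. If W is a matrix A_{p(·)} weight, i.e., [W]_{A_{p(·)}} = sup_Q |Q|^{−1} ‖ ‖ |W(x)W^{−1}(y)|_op 1_Q(y) ‖_{L^{p'(·)}_y} 1_Q(x) ‖_{L^{p(·)}_x} < ∞, then for every nonzero vector u ∈ F^d, the scalar function w_u(x) = |W(x)u| is a scalar A_{p(·)} weight with [w_u]_{A_{p(·)}} ≤ 4 [W]_{A_{p(·)}}. -/

import Mathlib

/-! Since `W(y)` is invertible, `|W(x)u| ≤ |W(x)W(y)⁻¹|_op |W(y)u|`, i.e.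
`w_u(x) w_u(y)⁻¹ ≤ |W(x)W(y)⁻¹|_op`. By homogeneity of the Luxemburg norm the inner
`L^{q(·)}` norm of `y ↦ w_u(x) w_u(y)⁻¹ 1_Q(y)` is `w_u(x) ‖w_u⁻¹ 1_Q‖_{q(·)}`, and taking
the outer `L^{p(·)}` norm in `x` yields `‖w_u 1_Q‖_{p(·)} ‖w_u⁻¹ 1_Q‖_{q(·)} ≤ [W]_{A_{p(·)}} |Q|`. -/

open MeasureTheory ENNReal
open scoped ComplexOrder

noncomputable section

abbrev Euc (n : ℕ) := EuclideanSpace ℝ (Fin n)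

/-- The half-open cube with lower-left corner `a` and side length `ℓ`,
with sides parallel to the coordinate axes. -/
def cube {n : ℕ} (a : Euc n) (ℓ : ℝ) : Set (Euc n) :=
  WithLp.ofLp ⁻¹' Set.univ.pi fun i => Set.Ico (a i) (a i + ℓ)

/-- The modular of a variable Lebesgue space with (extended-real valued) exponent `p`:
the integral of `f ^ p` over the set where `p` is finite plus the essential supremum
of `f` over the set where `p = ∞`. -/
def modularE {n : ℕ} (p : Euc n → ℝ≥0∞) (f : Euc n → ℝ≥0∞) : ℝ≥0∞ :=
  (∫⁻ x in {x | p x ≠ ∞}, f x ^ (p x).toReal) +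
    essSup f (volume.restrict {x | p x = ∞})

/-- The Luxemburg norm of the variable Lebesgue space `L^{p(·)}(ℝⁿ)`. -/
def luxNormE {n : ℕ} (p : Euc n → ℝ≥0∞) (f : Euc n → ℝ≥0∞) : ℝ≥0∞ :=
  sInf {l : ℝ≥0∞ | l ≠ 0 ∧ modularE p (fun x => f x / l) ≤ 1}

/-- The Euclidean norm of a vector in `ℂ^d`. -/
def evNorm {d : ℕ} (u : Fin d → ℂ) : ℝ := ‖(WithLp.equiv 2 (Fin d → ℂ)).symm u‖

/-- The operator norm of a `d × d` complex matrix, induced by the Euclidean norm. -/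
def opNorm {d : ℕ} (V : Matrix (Fin d) (Fin d) ℂ) : ℝ :=
  ⨆ u : {u : Fin d → ℂ // evNorm u = 1}, evNorm (V.mulVec u)

section Luxemburg

variable {n : ℕ} (p : Euc n → ℝ≥0∞)

lemma modularE_mono {f g : Euc n → ℝ≥0∞} (h : f ≤ g) : modularE p f ≤ modularE p g :=
  add_le_add (lintegral_mono fun x => ENNReal.rpow_le_rpow (h x) ENNReal.toReal_nonneg)
    (essSup_mono_ae (Filter.Eventually.of_forall h))

lemma luxNormE_mono {f g : Euc n → ℝ≥0∞} (h : f ≤ g) : luxNormE p f ≤ luxNormE p g := by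
  refine sInf_le_sInf fun l ⟨hl0, hl⟩ => ⟨hl0, le_trans (modularE_mono p fun x => ?_) hl⟩
  exact ENNReal.div_le_div_right (h x) l

lemma luxNormE_const_mul_le {c : ℝ≥0∞} (hc0 : c ≠ 0) (hct : c ≠ ∞) (f : Euc n → ℝ≥0∞) :
    luxNormE p (fun x => c * f x) ≤ c * luxNormE p f := by
  rw [mul_comm, ← ENNReal.div_le_iff hc0 hct]
  refine le_sInf fun l ⟨hl0, hl⟩ => ?_
  rw [ENNReal.div_le_iff hc0 hct, mul_comm]
  refine sInf_le ⟨mul_ne_zero hc0 hl0, ?_⟩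
  simpa only [ENNReal.mul_div_mul_left _ _ hc0 hct] using hl

lemma luxNormE_const_mul {c : ℝ≥0∞} (hc0 : c ≠ 0) (hct : c ≠ ∞) (f : Euc n → ℝ≥0∞) :
    luxNormE p (fun x => c * f x) = c * luxNormE p f := by
  refine le_antisymm (luxNormE_const_mul_le p hc0 hct f) ?_
  calc c * luxNormE p f = c * luxNormE p (fun x => c⁻¹ * (c * f x)) := by
        simp only [← mul_assoc, ENNReal.inv_mul_cancel hc0 hct, one_mul]
    _ ≤ c * (c⁻¹ * luxNormE p (fun x => c * f x)) := by
        gcongr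
        exact luxNormE_const_mul_le p (ENNReal.inv_ne_zero.mpr hct) (ENNReal.inv_ne_top.mpr hc0) _
    _ = luxNormE p (fun x => c * f x) := by
        rw [← mul_assoc, ENNReal.mul_inv_cancel hc0 hct, one_mul]

theorem luxNormE_indicator_mul_luxNormE_indicator_inv_le (q : Euc n → ℝ≥0∞) (s : Set (Euc n))
    {w : Euc n → ℝ≥0∞} (hwt : ∀ x, w x ≠ ∞) (K : Euc n → Euc n → ℝ≥0∞)
    (hK : ∀ x ∈ s, ∀ y ∈ s, w x ≤ K x y * w y) :
    luxNormE p (s.indicator w) * luxNormE q (s.indicator fun y => (w y)⁻¹) ≤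
      luxNormE p (s.indicator fun x => luxNormE q (s.indicator (K x))) := by
  set B := luxNormE q (s.indicator fun y => (w y)⁻¹)
  have hwB : ∀ x ∈ s, w x * B ≤ luxNormE q (s.indicator (K x)) := by
    intro x hx
    rcases eq_or_ne (w x) 0 with hx0 | hx0
    · simp [hx0]
    rw [← luxNormE_const_mul q hx0 (hwt x)]
    refine luxNormE_mono q fun y => ?_
    by_cases hy : y ∈ s
    · simpa only [Set.indicator_of_mem hy, ← div_eq_mul_inv] using
        ENNReal.div_le_of_le_mul (hK x hx y hy)
    · simp [hy]
  -- `B` may be infinite, where homogeneity fails; approximate it from below by finite `b`.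
  refine ENNReal.mul_le_of_forall_lt fun a _ b hb => ?_
  rw [mul_comm]
  rcases eq_or_ne b 0 with rfl | hb0
  · simp
  calc b * a ≤ b * luxNormE p (s.indicator w) := by gcongr
    _ = luxNormE p (fun x => b * s.indicator w x) :=
        (luxNormE_const_mul p hb0 hb.ne_top _).symm
    _ ≤ luxNormE p (s.indicator fun x => luxNormE q (s.indicator (K x))) := by
        refine luxNormE_mono p fun x => ?_
        by_cases hx : x ∈ s
        · simp only [Set.indicator_of_mem hx]
          rw [mul_comm]
          exact (mul_le_mul_right hb.le _).trans (hwB x hx)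
        · simp [hx]

end Luxemburg

section OperatorNorm

open Matrix

variable {d : ℕ}

lemma evNorm_eq_norm_toLp (v : Fin d → ℂ) : evNorm v = ‖WithLp.toLp 2 v‖ := rfl

lemma evNorm_nonneg (v : Fin d → ℂ) : 0 ≤ evNorm v := norm_nonneg _

lemma evNorm_smul (c : ℂ) (v : Fin d → ℂ) : evNorm (c • v) = ‖c‖ * evNorm v := by
  simp only [evNorm_eq_norm_toLp, WithLp.toLp_smul, norm_smul]

lemma evNorm_mulVec_le_norm_toEuclideanCLM (V : Matrix (Fin d) (Fin d) ℂ) (v : Fin d → ℂ) :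
    evNorm (V *ᵥ v) ≤ ‖toEuclideanCLM (𝕜 := ℂ) V‖ * evNorm v :=
  (toEuclideanCLM (𝕜 := ℂ) V).le_opNorm (WithLp.toLp 2 v)

lemma evNorm_mulVec_le_opNorm_mul (V : Matrix (Fin d) (Fin d) ℂ) (v : Fin d → ℂ) :
    evNorm (V *ᵥ v) ≤ opNorm V * evNorm v := by
  rcases eq_or_ne v 0 with rfl | hv
  · simp [evNorm_eq_norm_toLp]
  have hbdd : BddAbove (Set.range fun u : {u : Fin d → ℂ // evNorm u = 1} => evNorm (V *ᵥ u)) :=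
    ⟨_, Set.forall_mem_range.mpr fun u => by
      simpa only [u.2, mul_one] using evNorm_mulVec_le_norm_toEuclideanCLM V u⟩
  have hc : 0 < evNorm v := by
    rw [evNorm_eq_norm_toLp, norm_pos_iff]
    exact fun h => hv (WithLp.toLp_injective 2 (h.trans (WithLp.toLp_zero 2).symm))
  have hnorm : ‖(evNorm v : ℂ)⁻¹‖ = (evNorm v)⁻¹ := by
    rw [norm_inv, Complex.norm_real, Real.norm_of_nonneg hc.le]
  have hunit : evNorm ((evNorm v : ℂ)⁻¹ • v) = 1 := by
    rw [evNorm_smul, hnorm, inv_mul_cancel₀ hc.ne']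
  have hle := le_ciSup hbdd ⟨_, hunit⟩
  rw [mulVec_smul, evNorm_smul, hnorm, inv_mul_le_iff₀ hc] at hle
  rwa [mul_comm] at hle

lemma evNorm_mulVec_le_opNorm_mul_inv_mul {A B : Matrix (Fin d) (Fin d) ℂ} (hB : IsUnit B.det)
    (u : Fin d → ℂ) : evNorm (A *ᵥ u) ≤ opNorm (A * B⁻¹) * evNorm (B *ᵥ u) := by
  simpa only [mulVec_mulVec, mul_assoc, nonsing_inv_mul B hB, mul_one] using
    evNorm_mulVec_le_opNorm_mul (A * B⁻¹) (B *ᵥ u)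

end OperatorNorm

theorem stmt13_general {n d : ℕ} (p q : Euc n → ℝ≥0∞)
    (W : Euc n → Matrix (Fin d) (Fin d) ℂ) (hW : ∀ x, (W x).PosDef)
    (CW : ℝ≥0∞)
    (hWA : ∀ (a : Euc n) (ℓ : ℝ), 0 < ℓ →
      luxNormE p (fun x => (cube a ℓ).indicator (fun x =>
        luxNormE q (fun y => (cube a ℓ).indicator
          (fun y => ENNReal.ofReal (opNorm (W x * (W y)⁻¹))) y)) x) ≤
        CW * ENNReal.ofReal (ℓ ^ n))
    (u : Fin d → ℂ) :
    ∀ (a : Euc n) (ℓ : ℝ), 0 < ℓ →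
      luxNormE p (fun x => (cube a ℓ).indicator
          (fun x => ENNReal.ofReal (evNorm ((W x).mulVec u))) x) *
        luxNormE q (fun y => (cube a ℓ).indicator
          (fun y => (ENNReal.ofReal (evNorm ((W y).mulVec u)))⁻¹) y) ≤
        4 * CW * ENNReal.ofReal (ℓ ^ n) := by
  intro a ℓ hℓ
  have hpointwise : ∀ x y, ENNReal.ofReal (evNorm ((W x).mulVec u)) ≤
      ENNReal.ofReal (opNorm (W x * (W y)⁻¹)) * ENNReal.ofReal (evNorm ((W y).mulVec u)) :=
    fun x y => by
      rw [← ENNReal.ofReal_mul' (evNorm_nonneg _)]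
      exact ENNReal.ofReal_le_ofReal <| evNorm_mulVec_le_opNorm_mul_inv_mul
        ((Matrix.isUnit_iff_isUnit_det _).mp (hW y).isUnit) u
  calc _ ≤ CW * ENNReal.ofReal (ℓ ^ n) :=
        (luxNormE_indicator_mul_luxNormE_indicator_inv_le p q _ (fun _ => ofReal_ne_top) _
          fun x _ y _ => hpointwise x y).trans (hWA a ℓ hℓ)
    _ ≤ 4 * CW * ENNReal.ofReal (ℓ ^ n) := by
        rw [mul_assoc]
        exact le_mul_of_one_le_left zero_le (by norm_num)

/-- Let `p(·) ∈ P(ℝⁿ)` with conjugate `q(·)` and let `W : ℝⁿ → S_d` be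
a matrix weight. If `W` is a matrix `A_{p(·)}` weight with characteristic bounded by
`CW`, i.e. for every cube `Q`,
`‖ x ↦ ‖ y ↦ |W(x)W(y)⁻¹|_op 1_Q(y)‖_{L^{q(·)}} 1_Q(x) ‖_{L^{p(·)}} ≤ CW |Q|`,
then for every nonzero `u ∈ ℂ^d` the scalar function `w_u(x) = |W(x)u|` is a scalar
`A_{p(·)}` weight with characteristic at most `4 CW`, i.e. for every cube `Q`,
`‖w_u 1_Q‖_{L^{p(·)}} ‖w_u⁻¹ 1_Q‖_{L^{q(·)}} ≤ 4 CW |Q|`. -/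
theorem stmt13 {n d : ℕ} (p q : Euc n → ℝ≥0∞)
    (hp1 : ∀ x, 1 ≤ p x) (hpq : ∀ x, (p x)⁻¹ + (q x)⁻¹ = 1) (hpm : Measurable p)
    (W : Euc n → Matrix (Fin d) (Fin d) ℂ) (hW : ∀ x, (W x).PosDef)
    (hWm : ∀ i j, Measurable fun x => W x i j)
    (CW : ℝ≥0∞)
    (hWA : ∀ (a : Euc n) (ℓ : ℝ), 0 < ℓ →
      luxNormE p (fun x => (cube a ℓ).indicator (fun x =>
        luxNormE q (fun y => (cube a ℓ).indicator
          (fun y => ENNReal.ofReal (opNorm (W x * (W y)⁻¹))) y)) x) ≤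
        CW * ENNReal.ofReal (ℓ ^ n))
    (u : Fin d → ℂ) (hu : u ≠ 0) :
    ∀ (a : Euc n) (ℓ : ℝ), 0 < ℓ →
      luxNormE p (fun x => (cube a ℓ).indicator
          (fun x => ENNReal.ofReal (evNorm ((W x).mulVec u))) x) *
        luxNormE q (fun y => (cube a ℓ).indicator
          (fun y => (ENNReal.ofReal (evNorm ((W y).mulVec u)))⁻¹) y) ≤
        4 * CW * ENNReal.ofReal (ℓ ^ n) :=
  stmt13_general p q W hW CW hWA u
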